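/- arXiv:2409.18335 — 3 statements merged into one kernel-verified Lean document; each statement's English description precedes it below -/
import Mathlib

section
/- Let 𝒟 be the class of sets S ⊆ ℝⁿ that are compact, 0-comprehensive, and contain a point strictly positive in every coordinate, and let F : 𝒟 → ℝⁿ be a bargaining solution with F(S) ∈ S for all S ∈ 𝒟 that satisfies symmetry, weak Pareto optimality, and strong monotonicity. Then for every S ∈ 𝒟, F(S) ≥ E(S,0) componentwise, where E(S,0) = (a,…,a) with a = max{t ≥ 0 : (t,…,t) ∈ S}. -/
/-- `S` is `0`-comprehensive: if `0 ≤ x ≤ y` componentwise and `y ∈ S` then `x ∈ S`. -/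
def ZeroComprehensive {n : ℕ} (S : Set (Fin n → ℝ)) : Prop :=
  ∀ x y : Fin n → ℝ, 0 ≤ x → x ≤ y → y ∈ S → x ∈ S

/-- `S` belongs to the admissible domain `𝒟`: `S` is compact, `0`-comprehensive,
and contains a point strictly positive in every coordinate. -/
def InDomain {n : ℕ} (S : Set (Fin n → ℝ)) : Prop :=
  IsCompact S ∧ ZeroComprehensive S ∧ ∃ x ∈ S, ∀ i, 0 < x i

/-- Let `F` be a bargaining solution on the admissible domain `𝒟` (compact,
`0`-comprehensive sets containing a strictly positive point) with `F S ∈ S`,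
satisfying symmetry, weak Pareto optimality, and strong monotonicity.  Then for
every `S ∈ 𝒟`, `F S ≥ E(S,0)` componentwise, where `E(S,0) = (a,…,a)` with
`a = max {t ≥ 0 : (t,…,t) ∈ S}`. -/
theorem solution_dominates_egalitarian
    (n : ℕ) (F : Set (Fin n → ℝ) → (Fin n → ℝ))
    (hFmem : ∀ S, InDomain S → F S ∈ S)
    (hFsym : ∀ S, InDomain S →
      (∀ π : Equiv.Perm (Fin n), (fun y : Fin n → ℝ => y ∘ π) '' S = S) →
      ∀ i j : Fin n, F S i = F S j)
    (hFwpo : ∀ S, InDomain S → ¬ ∃ y ∈ S, ∀ i, F S i < y i)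
    (hFmono : ∀ S S', InDomain S → InDomain S' → S ⊆ S' → F S ≤ F S') :
    ∀ S, InDomain S → ∀ a : ℝ,
      IsGreatest {t : ℝ | 0 ≤ t ∧ (fun _ : Fin n => t) ∈ S} a →
      (fun _ : Fin n => a) ≤ F S := by
  intro S hS a ha
  rcases Nat.eq_zero_or_pos n with hn | hn
  · subst hn; intro i; exact i.elim0
  haveI : NeZero n := ⟨hn.ne'⟩
  obtain ⟨hSc, hScomp, x, hxS, hxpos⟩ := hS
  -- a > 0
  have hapos : 0 < a := by
    set m := Finset.univ.inf' (Finset.univ_nonempty) x with hm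
    have hmpos : 0 < m := by
      rw [hm, Finset.lt_inf'_iff]
      exact fun i _ => hxpos i
    have hmle : (fun _ : Fin n => m) ≤ x := fun i =>
      Finset.inf'_le _ (Finset.mem_univ i)
    have : (fun _ : Fin n => m) ∈ S :=
      hScomp _ x (fun i => hmpos.le) hmle hxS
    exact lt_of_lt_of_le hmpos (ha.2 ⟨hmpos.le, this⟩)
  have haS : (fun _ : Fin n => a) ∈ S := ha.1.2
  -- the cube T
  set T : Set (Fin n → ℝ) := Set.Icc 0 (fun _ => a) with hT
  have hTdom : InDomain T := by
    refine ⟨isCompact_Icc, ?_, ⟨fun _ => a, ?_, fun i => hapos⟩⟩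
    · intro u v hu huv hv
      exact ⟨hu, le_trans huv hv.2⟩
    · exact ⟨fun i => hapos.le, le_refl _⟩
  have hTsub : T ⊆ S := fun u hu => hScomp u (fun _ => a) hu.1 hu.2 haS
  -- T is symmetric
  have hTsym : ∀ π : Equiv.Perm (Fin n), (fun y : Fin n → ℝ => y ∘ π) '' T = T := by
    intro π
    ext u
    constructor
    · rintro ⟨v, ⟨hv0, hva⟩, rfl⟩
      exact ⟨fun i => hv0 (π i), fun i => hva (π i)⟩
    · intro hu
      refine ⟨u ∘ π.symm, ⟨fun i => hu.1 (π.symm i), fun i => hu.2 (π.symm i)⟩, ?_⟩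
      funext i; simp
  -- F T = const a
  have hcoord : ∀ i j, F T i = F T j := hFsym T hTdom hTsym
  have hFTmem : F T ∈ T := hFmem T hTdom
  have hFTa : ∀ i : Fin n, F T i = a := by
    intro i
    have hle : F T i ≤ a := hFTmem.2 i
    rcases lt_or_eq_of_le hle with hlt | heq
    · exfalso
      apply hFwpo T hTdom
      refine ⟨fun _ => a, ⟨fun j => hapos.le, le_refl _⟩, fun j => ?_⟩
      rw [hcoord j i]; exact hlt
    · exact heq
  have := hFmono T S hTdom ⟨hSc, hScomp, x, hxS, hxpos⟩ hTsub
  intro i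
  have := this i
  rw [hFTa i] at this
  exact this
end

section
/- Let S ⊆ ℝⁿ be compact, 0-comprehensive, and contain a point strictly positive in every coordinate, let a = max{t ≥ 0 : (t,…,t) ∈ S} and x = (a,…,a), and let β ∈ ℝ satisfy −β ≤ yᵢ ≤ β for all y ∈ S and all i, with β > a. Define T' = {y ∈ ℝⁿ : yᵢ ≤ β for all i} \ {y ∈ ℝⁿ : y > x componentwise strictly}. Then S ⊆ T', x ∈ T', x is weakly Pareto optimal in T', and x is the unique element of the weak Pareto set of T' that has all coordinates equal. -/
/-- Let `S ⊆ ℝⁿ` be compact, `0`-comprehensive, and contain a strictly positive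
point, let `a = max {t ≥ 0 : (t,…,t) ∈ S}` and `x = (a,…,a)`, and let `β`
satisfy `−β ≤ yᵢ ≤ β` for all `y ∈ S` and all `i`, with `β > a`.  Define
`T' = {y : yᵢ ≤ β ∀ i} \ {y : y > x componentwise}`.  Then `S ⊆ T'`, `x ∈ T'`,
`x` is weakly Pareto optimal in `T'`, and `x` is the unique element of the weak
Pareto set of `T'` having all coordinates equal. -/
theorem truncated_hypercube_properties
    (n : ℕ) (S : Set (Fin n → ℝ))
    (hcompact : IsCompact S)
    (hcomp : ZeroComprehensive S)
    (hpos : ∃ x ∈ S, ∀ i, 0 < x i)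
    (a : ℝ)
    (ha : IsGreatest {t : ℝ | 0 ≤ t ∧ (fun _ : Fin n => t) ∈ S} a)
    (β : ℝ)
    (hβbound : ∀ y ∈ S, ∀ i, -β ≤ y i ∧ y i ≤ β)
    (hβa : a < β)
    (T' : Set (Fin n → ℝ))
    (hT' : T' = {y : Fin n → ℝ | ∀ i, y i ≤ β} \ {y : Fin n → ℝ | ∀ i, a < y i}) :
    S ⊆ T' ∧
    (fun _ : Fin n => a) ∈ T' ∧
    (¬ ∃ z ∈ T', ∀ i, a < z i) ∧
    (∀ y ∈ T', (¬ ∃ z ∈ T', ∀ i, y i < z i) → (∀ i j : Fin n, y i = y j) →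
      y = fun _ : Fin n => a) := by
  subst hT'
  have ha0 : 0 ≤ a := ha.1.1
  -- n = 0 is impossible
  rcases Nat.eq_zero_or_pos n with hn | hn
  · exfalso
    obtain ⟨x, hxS, _⟩ := hpos
    have h1 : a + 1 ∈ {t : ℝ | 0 ≤ t ∧ (fun _ : Fin n => t) ∈ S} := by
      refine ⟨by linarith, ?_⟩
      have hx : (fun _ : Fin n => a + 1) = x := by
        funext i; exact absurd i.isLt (by omega)
      rw [hx]; exact hxS
    linarith [ha.2 h1]
  obtain ⟨i₀⟩ := Fin.pos_iff_nonempty.mp hn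
  have hXT : (fun _ : Fin n => a) ∈ ({y : Fin n → ℝ | ∀ i, y i ≤ β} \ {y : Fin n → ℝ | ∀ i, a < y i}) := by
    refine ⟨fun i => le_of_lt hβa, fun hall => lt_irrefl a (hall i₀)⟩
  refine ⟨?_, hXT, ?_, ?_⟩
  · intro y hy
    refine ⟨fun i => (hβbound y hy i).2, fun hall => ?_⟩
    obtain ⟨j, -, hj⟩ := Finset.exists_min_image Finset.univ y ⟨i₀, Finset.mem_univ i₀⟩
    have hmem : y j ∈ {t : ℝ | 0 ≤ t ∧ (fun _ : Fin n => t) ∈ S} := by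
      refine ⟨le_of_lt (lt_of_le_of_lt ha0 (hall j)), ?_⟩
      exact hcomp _ y (fun i => le_of_lt (lt_of_le_of_lt ha0 (hall j)))
        (fun i => hj i (Finset.mem_univ i)) hy
    linarith [ha.2 hmem, hall j]
  · rintro ⟨z, hz, hall⟩
    exact hz.2 hall
  · intro y hy hpar hconst
    have hle : y i₀ ≤ a := by
      by_contra h
      exact hy.2 (fun i => by rw [hconst i i₀]; linarith)
    rcases lt_or_eq_of_le hle with hlt | heq
    · exact absurd ⟨fun _ => a, hXT, fun i => by rw [hconst i i₀]; exact hlt⟩ hpar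
    · funext i; rw [hconst i i₀, heq]
end

section
/- Let 𝒟 be the class of sets S ⊆ ℝⁿ that are compact, 0-comprehensive, and contain a point strictly positive in every coordinate, and let F be a bargaining solution defined on all subsets of ℝⁿ arising in the construction (in particular on 𝒟 and on truncated hypercubes T' = {y : yᵢ ≤ β ∀i} \ {y : y > x componentwise}) with F(S) ∈ S, satisfying symmetry, weak Pareto optimality, and strong monotonicity. Then for every S ∈ 𝒟, F(S) ≤ E(S,0) componentwise, where E(S,0) = (a,…,a) with a = max{t ≥ 0 : (t,…,t) ∈ S}. -/
/-- `S` is a set arising in the construction: either a member of the admissible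
domain `𝒟`, or a truncated hypercube
`{y : yᵢ ≤ β ∀ i} \ {y : y > (c,…,c) componentwise}`. -/
def InConstructionDomain {n : ℕ} (S : Set (Fin n → ℝ)) : Prop :=
  InDomain S ∨ ∃ β c : ℝ,
    S = {y : Fin n → ℝ | ∀ i, y i ≤ β} \ {y : Fin n → ℝ | ∀ i, c < y i}

/-- Let `F` be a bargaining solution defined on all subsets of `ℝⁿ` arising in
the construction (in particular on the admissible domain `𝒟` and on truncated
hypercubes) with `F S ∈ S`, satisfying symmetry, weak Pareto optimality, and
strong monotonicity.  Then for every `S ∈ 𝒟`, `F S ≤ E(S,0)` componentwise,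
where `E(S,0) = (a,…,a)` with `a = max {t ≥ 0 : (t,…,t) ∈ S}`. -/
theorem solution_dominated_by_egalitarian
    (n : ℕ) (F : Set (Fin n → ℝ) → (Fin n → ℝ))
    (hFmem : ∀ S, InConstructionDomain S → F S ∈ S)
    (hFsym : ∀ S, InConstructionDomain S →
      (∀ π : Equiv.Perm (Fin n), (fun y : Fin n → ℝ => y ∘ π) '' S = S) →
      ∀ i j : Fin n, F S i = F S j)
    (hFwpo : ∀ S, InConstructionDomain S → ¬ ∃ y ∈ S, ∀ i, F S i < y i)
    (hFmono : ∀ S S', InConstructionDomain S → InConstructionDomain S' →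
      S ⊆ S' → F S ≤ F S') :
    ∀ S, InDomain S → ∀ a : ℝ,
      IsGreatest {t : ℝ | 0 ≤ t ∧ (fun _ : Fin n => t) ∈ S} a →
      F S ≤ fun _ : Fin n => a := by
  intro S hS a ha
  obtain ⟨hcpt, hzc, x, hxS, hxpos⟩ := hS
  obtain ⟨C, hC⟩ := hcpt.isBounded.exists_norm_le
  set T : Set (Fin n → ℝ) :=
    {y : Fin n → ℝ | ∀ i, y i ≤ C} \ {y : Fin n → ℝ | ∀ i, a < y i} with hTdef
  have hTdom : InConstructionDomain T := Or.inr ⟨C, a, rfl⟩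
  have hSdom : InConstructionDomain S := Or.inl ⟨hcpt, hzc, x, hxS, hxpos⟩
  -- every point of S has coordinates ≤ C
  have hcoord : ∀ y ∈ S, ∀ i, y i ≤ C := by
    intro y hy i
    calc y i ≤ |y i| := le_abs_self _
    _ = ‖y i‖ := rfl
    _ ≤ ‖y‖ := norm_le_pi_norm y i
    _ ≤ C := hC y hy
  intro i
  -- with an index i in hand, Fin n is nonempty
  have hSsub : S ⊆ T := by
    intro y hy
    refine ⟨fun j => hcoord y hy j, ?_⟩
    intro hya
    -- the constant min of y would contradict maximality of a
    have hne : (Finset.univ : Finset (Fin n)).Nonempty := ⟨i, Finset.mem_univ i⟩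
    set t : ℝ := Finset.univ.inf' hne (fun j => y j) with htdef
    have hat : a < t := by
      rw [htdef, Finset.lt_inf'_iff]
      exact fun j _ => hya j
    have h0t : (0 : ℝ) ≤ t := le_trans ha.1.1 hat.le
    have hty : (fun _ : Fin n => t) ≤ y := by
      intro j
      exact Finset.inf'_le _ (Finset.mem_univ j)
    have htS : (fun _ : Fin n => t) ∈ S :=
      hzc _ y (fun j => h0t) hty hy
    exact absurd (ha.2 ⟨h0t, htS⟩) (not_le.mpr hat)
  -- T is symmetric
  have hTsym : ∀ π : Equiv.Perm (Fin n), (fun y : Fin n → ℝ => y ∘ π) '' T = T := by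
    intro π
    ext z
    constructor
    · rintro ⟨y, ⟨hy1, hy2⟩, rfl⟩
      refine ⟨fun j => hy1 (π j), ?_⟩
      intro hz
      exact hy2 (fun j => by simpa using hz (π.symm j))
    · rintro ⟨hz1, hz2⟩
      refine ⟨z ∘ π.symm, ⟨fun j => hz1 _, fun h => hz2 (fun j => by simpa using h (π j))⟩, ?_⟩
      ext j
      simp
  -- F T has equal coordinates and lies in T, hence all coordinates ≤ a
  have hFT := hFmem T hTdom
  obtain ⟨hFT1, hFT2⟩ := hFT
  have hex : ∃ j, F T j ≤ a := by
    by_contra h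
    push_neg at h
    exact hFT2 h
  obtain ⟨j, hj⟩ := hex
  have hmono := hFmono S T hSdom hTdom hSsub i
  calc F S i ≤ F T i := hmono
  _ = F T j := hFsym T hTdom hTsym i j
  _ ≤ a := hj
end
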